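/- arXiv:2305.09030 — 2 statements merged into one kernel-verified Lean document; each statement's English description precedes it below -/
import Mathlib

section
/- Fix a finite set S of integers. For all integers a ≥ 1 and n ≥ 0, f(a,0,n) = Σ_{k=0}^{n} g(a,0,k)·f(0,0,n−k), where g(a,0,k) denotes the number of walks of length k from height a with steps in S satisfying h_k = 0 and h_i > 0 for all 0 ≤ i < k. -/
open Finset

/-- Height after `i` steps of the walk `s`, starting at height `a`. -/
def height {n : ℕ} (a : ℤ) (s : Fin n → ℤ) (i : ℕ) : ℤ :=
  a + ∑ j ∈ Finset.univ.filter (fun j : Fin n => (j : ℕ) < i), s j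

open scoped Classical in
/-- `f S a b n`: number of walks of length n from height a with steps in S that
stay weakly above the x-axis and end at height b. -/
noncomputable def f (S : Finset ℤ) (a b : ℤ) (n : ℕ) : ℕ :=
  ((Fintype.piFinset fun _ : Fin n => S).filter
    (fun s => (∀ i ∈ Finset.range (n + 1), 0 ≤ height a s i) ∧ height a s n = b)).card

open scoped Classical in
/-- `ga0 S a k`: number of walks of length k from height a with steps in S with
h_k = 0 and h_i > 0 for all 0 ≤ i < k. -/
noncomputable def ga0 (S : Finset ℤ) (a : ℤ) (k : ℕ) : ℕ :=
  ((Fintype.piFinset fun _ : Fin k => S).filter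
    (fun s => height a s k = 0 ∧ ∀ i ∈ Finset.range k, 0 < height a s i)).card

/-! Cut a nonnegative walk from `a` to `0` at the first time `k` it reaches `0`. Before `k` it is
strictly positive and ends at `0`; after `k` it is a nonnegative walk from `0` to `0` of length
`n - k`. Conversely, concatenating any two such walks gives a nonnegative walk first reaching `0`
at time `k`, so `Fin.append` is a bijection onto the walks with first zero at `k`. -/

section Walks

variable {k m n : ℕ}

def IsNonneg (a : ℤ) (s : Fin n → ℤ) : Prop :=
  ∀ i ∈ range (n + 1), 0 ≤ height a s i

def FirstHitsZeroAt (a : ℤ) (s : Fin n → ℤ) (k : ℕ) : Prop :=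
  height a s k = 0 ∧ ∀ i ∈ range k, 0 < height a s i

theorem height_append_of_le (a : ℤ) (p : Fin k → ℤ) (q : Fin m → ℤ) {i : ℕ} (hi : i ≤ k) :
    height a (Fin.append p q) i = height a p i := by
  simp only [height, sum_filter, Fin.sum_univ_add, Fin.append_left, Fin.append_right,
    Fin.val_castAdd, Fin.val_natAdd]
  rw [add_right_inj, add_eq_left]
  exact sum_eq_zero fun j _ => if_neg (by omega)

theorem height_append_add (a : ℤ) (p : Fin k → ℤ) (q : Fin m → ℤ) (i : ℕ) :
    height a (Fin.append p q) (k + i) = height (height a p k) q i := by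
  simp only [height, sum_filter, Fin.sum_univ_add, Fin.append_left, Fin.append_right,
    Fin.val_castAdd, Fin.val_natAdd, Nat.add_lt_add_iff_left, Fin.is_lt, if_true, add_assoc]
  rw [sum_congr rfl fun j _ => if_pos (by omega)]

theorem isNonneg_append {a : ℤ} {p : Fin k → ℤ} {q : Fin m → ℤ} :
    IsNonneg a (Fin.append p q) ↔ IsNonneg a p ∧ IsNonneg (height a p k) q := by
  simp only [IsNonneg, mem_range, Nat.lt_succ_iff]
  constructor
  · intro h
    refine ⟨fun i hi => ?_, fun j hj => ?_⟩
    · rw [← height_append_of_le a p q hi]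
      exact h i (by omega)
    · rw [← height_append_add]
      exact h (k + j) (by omega)
  · rintro ⟨hp, hq⟩ i hi
    rcases le_or_gt i k with hik | hki
    · rw [height_append_of_le a p q hik]
      exact hp i hik
    · obtain ⟨j, rfl⟩ := Nat.exists_eq_add_of_lt hki
      rw [add_assoc, height_append_add]
      exact hq _ (by omega)

theorem firstHitsZeroAt_append {a : ℤ} {p : Fin k → ℤ} {q : Fin m → ℤ} :
    FirstHitsZeroAt a (Fin.append p q) k ↔ FirstHitsZeroAt a p k := by
  simp only [FirstHitsZeroAt, mem_range]
  rw [height_append_of_le a p q le_rfl]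
  refine and_congr_right fun _ => forall₂_congr fun i hi => ?_
  rw [height_append_of_le a p q hi.le]

theorem FirstHitsZeroAt.isNonneg {a : ℤ} {p : Fin k → ℤ} (hp : FirstHitsZeroAt a p k) :
    IsNonneg a p := by
  intro i hi
  rcases (mem_range_succ_iff.mp hi).lt_or_eq with hik | rfl
  · exact (hp.2 i (mem_range.mpr hik)).le
  · exact hp.1.ge

theorem FirstHitsZeroAt.unique {a : ℤ} {s : Fin n → ℤ} {k l : ℕ} (hk : FirstHitsZeroAt a s k)
    (hl : FirstHitsZeroAt a s l) : k = l := by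
  by_contra hne
  rcases Nat.lt_or_gt_of_ne hne with hkl | hlk
  · exact (hl.2 k (mem_range.mpr hkl)).ne' hk.1
  · exact (hk.2 l (mem_range.mpr hlk)).ne' hl.1

theorem exists_firstHitsZeroAt {a : ℤ} {s : Fin n → ℤ} {j : ℕ} (hj : height a s j = 0)
    (hnonneg : ∀ i < j, 0 ≤ height a s i) : ∃ k ≤ j, FirstHitsZeroAt a s k := by
  classical
  have hex : ∃ i, height a s i = 0 := ⟨j, hj⟩
  refine ⟨Nat.find hex, Nat.find_min' hex hj, Nat.find_spec hex, fun i hi => ?_⟩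
  have hi := mem_range.mp hi
  exact (hnonneg i (hi.trans_le (Nat.find_min' hex hj))).lt_of_ne' (Nat.find_min hex hi)

end Walks

open scoped Classical in
theorem card_eq_sum_card_filter_firstHitsZeroAt {n : ℕ} {a : ℤ} (A : Finset (Fin n → ℤ))
    (hA : ∀ s ∈ A, IsNonneg a s ∧ height a s n = 0) :
    #A = ∑ k ∈ range (n + 1), #{s ∈ A | FirstHitsZeroAt a s k} := by
  rw [← card_biUnion]
  · congr
    ext s
    simp only [mem_biUnion, mem_filter, mem_range]
    refine ⟨fun hs => ?_, fun ⟨_, _, hs, _⟩ => hs⟩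
    obtain ⟨hnonneg, hend⟩ := hA s hs
    obtain ⟨k, hk, hfirst⟩ := exists_firstHitsZeroAt hend fun i hi => hnonneg i (mem_range.mpr (by omega))
    exact ⟨k, by omega, hs, hfirst⟩
  · intro k _ l _ hkl
    rw [Function.onFun, disjoint_filter]
    exact fun s _ hk hl => hkl (hk.unique hl)

theorem card_eq_ga0_mul_f (S : Finset ℤ) (a : ℤ) {k m : ℕ} {B : Finset (Fin (k + m) → ℤ)}
    (hB : ∀ s, s ∈ B ↔ s ∈ Fintype.piFinset (fun _ => S) ∧
      (IsNonneg a s ∧ height a s (k + m) = 0) ∧ FirstHitsZeroAt a s k) :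
    #B = ga0 S a k * f S 0 0 m := by
  rw [ga0, f, ← card_product]
  refine (card_equiv (Fin.appendEquiv k m) fun ⟨p, q⟩ => ?_).symm
  rw [show Fin.appendEquiv k m (p, q) = Fin.append p q from rfl, hB]
  simp only [mem_product, mem_filter, Fintype.mem_piFinset,
    Fin.forall_fin_add, Fin.append_left, Fin.append_right]
  rw [isNonneg_append, height_append_add, firstHitsZeroAt_append]
  constructor
  · rintro ⟨⟨hpS, hp⟩, hqS, hq⟩
    have hp : FirstHitsZeroAt a p k := hp
    rw [hp.1]
    exact ⟨⟨hpS, hqS⟩, ⟨⟨hp.isNonneg, hq.1⟩, hq.2⟩, hp⟩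
  · rintro ⟨⟨hpS, hqS⟩, ⟨⟨-, hq⟩, hqm⟩, hp⟩
    rw [hp.1] at hq hqm
    exact ⟨⟨hpS, hp⟩, hqS, hq, hqm⟩

theorem stmt7_general (S : Finset ℤ) (a : ℤ) (n : ℕ) :
    f S a 0 n = ∑ k ∈ Finset.range (n + 1), ga0 S a k * f S 0 0 (n - k) := by
  classical
  rw [f, card_eq_sum_card_filter_firstHitsZeroAt _ fun s hs => ?_]
  · refine sum_congr rfl fun k hk => ?_
    obtain ⟨m, rfl⟩ := Nat.exists_eq_add_of_le (mem_range_succ_iff.mp hk)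
    rw [Nat.add_sub_cancel_left]
    exact card_eq_ga0_mul_f S a fun s => by simp only [mem_filter, and_assoc]; rfl
  · simp only [mem_filter] at hs
    exact hs.2

/-- for a ≥ 1 and n ≥ 0, f(a,0,n) = Σ_{k=0}^{n} g(a,0,k)·f(0,0,n−k). -/
theorem stmt7 (S : Finset ℤ) (a : ℤ) (ha : 1 ≤ a) (n : ℕ) :
    f S a 0 n = ∑ k ∈ Finset.range (n + 1), ga0 S a k * f S 0 0 (n - k) :=
  stmt7_general S a n
end

section
/- For every integer n ≥ 2, the polynomial identity Σ_{w} q^{area(w)} = q^{n−1} · Σ_{v} q^{area(v)} holds in ℤ[q], where the first sum is over all strict Dyck paths w of length n and the second sum is over all Dyck paths v of length n − 2. -/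
/-!
A strict Dyck path of length `m + 2` is exactly the elevation of a Dyck path `v` of length `m`:
an up-step, then `v`, then a down-step. Elevation turns the heights `h₀, …, hₘ` of `v` into the
intermediate heights `1 + h₀, …, 1 + hₘ`, and `h₀ = hₘ = 0`, so it adds `m + 1` to the area.
-/

open Finset Polynomial

/-- The area under a path: the sum of its intermediate heights h_1 + ⋯ + h_{n−1}
(a natural number, since heights of Dyck paths are nonnegative). -/
def area {n : ℕ} (s : Fin n → ℤ) : ℕ :=
  (∑ i ∈ Finset.Ico 1 n, height 0 s i).toNat

open scoped Classical in
/-- Dyck paths of length `n`. -/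
noncomputable def dyckPaths (n : ℕ) : Finset (Fin n → ℤ) :=
  (Fintype.piFinset fun _ => ({1, -1} : Finset ℤ)).filter
    (fun s => (∀ i ∈ Finset.Icc 1 n, 0 ≤ height 0 s i) ∧ height 0 s n = 0)

open scoped Classical in
/-- Strict Dyck paths of length `n`: Dyck paths with h_i > 0 for all 0 < i < n. -/
noncomputable def strictDyckPaths (n : ℕ) : Finset (Fin n → ℤ) :=
  (dyckPaths n).filter (fun s => ∀ i ∈ Finset.Ioo 0 n, 0 < height 0 s i)

section Height

variable {n : ℕ}

lemma height_zero (a : ℤ) (s : Fin n → ℤ) : height a s 0 = a := by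
  simp [height]

lemma height_eq_add_height_zero (a : ℤ) (s : Fin n → ℤ) (i : ℕ) :
    height a s i = a + height 0 s i := by
  simp [height]

lemma height_cons (a x : ℤ) (s : Fin n → ℤ) (i : ℕ) :
    height a (Fin.cons x s : Fin (n + 1) → ℤ) (i + 1) = height (a + x) s i := by
  simp only [height, sum_filter, Fin.sum_univ_succ, Fin.cons_zero, Fin.cons_succ,
    Fin.val_zero, Fin.val_succ, Nat.add_lt_add_iff_right, Nat.zero_lt_succ, if_true]
  ring

lemma height_snoc (a x : ℤ) (s : Fin n → ℤ) {i : ℕ} (hi : i ≤ n) :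
    height a (Fin.snoc s x : Fin (n + 1) → ℤ) i = height a s i := by
  simp only [height, sum_filter, Fin.sum_univ_castSucc, Fin.snoc_castSucc,
    Fin.snoc_last, Fin.val_last, Fin.val_castSucc, if_neg (Nat.not_lt.mpr hi), add_zero]

lemma height_snoc_last (a x : ℤ) (s : Fin n → ℤ) :
    height a (Fin.snoc s x : Fin (n + 1) → ℤ) (n + 1) = height a s n + x := by
  simp only [height, sum_filter, Fin.sum_univ_castSucc, Fin.snoc_castSucc,
    Fin.snoc_last, if_true, Fin.is_lt]
  ring

end Height

lemma mem_dyckPaths {n : ℕ} {s : Fin n → ℤ} :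
    s ∈ dyckPaths n ↔ (∀ i, s i = 1 ∨ s i = -1) ∧
      (∀ i ≤ n, 0 ≤ height 0 s i) ∧ height 0 s n = 0 := by
  classical
  simp only [dyckPaths, mem_filter, Fintype.mem_piFinset, mem_insert,
    mem_singleton, mem_Icc, and_congr_right_iff, and_congr_left_iff]
  refine fun _ _ => ⟨fun h i hi => ?_, fun h i hi => h i hi.2⟩
  rcases i with _ | i
  · rw [height_zero]
  · exact h _ ⟨i.succ_pos, hi⟩

lemma mem_strictDyckPaths {n : ℕ} {s : Fin n → ℤ} :
    s ∈ strictDyckPaths n ↔ (∀ i, s i = 1 ∨ s i = -1) ∧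
      (∀ i, 0 < i → i < n → 0 < height 0 s i) ∧ height 0 s n = 0 := by
  classical
  simp only [strictDyckPaths, mem_filter, mem_dyckPaths, mem_Ioo]
  constructor
  · rintro ⟨⟨hsteps, -, hend⟩, hpos⟩
    exact ⟨hsteps, fun i h0 hn => hpos i ⟨h0, hn⟩, hend⟩
  · rintro ⟨hsteps, hpos, hend⟩
    refine ⟨⟨hsteps, fun i hi => ?_, hend⟩, fun i hi => hpos i hi.1 hi.2⟩
    rcases Nat.eq_zero_or_pos i with rfl | h0
    · rw [height_zero]
    · rcases hi.lt_or_eq with hn | rfl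
      · exact (hpos i h0 hn).le
      · exact hend.ge

lemma sum_Ico_height_eq_sum_range {n : ℕ} {s : Fin n → ℤ} (hend : height 0 s n = 0) :
    ∑ i ∈ Ico 1 n, height 0 s i = ∑ i ∈ range (n + 1), height 0 s i := by
  refine sum_subset (fun i hi => by simp at hi ⊢; omega) fun i hi hi' => ?_
  obtain rfl | rfl : i = 0 ∨ i = n := by simp at hi hi'; omega
  exacts [height_zero 0 s, hend]

lemma cast_area {n : ℕ} {s : Fin n → ℤ} (hs : s ∈ dyckPaths n) :
    (area s : ℤ) = ∑ i ∈ Ico 1 n, height 0 s i :=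
  Int.toNat_of_nonneg <| sum_nonneg fun i hi =>
    (mem_dyckPaths.mp hs).2.1 i (mem_Ico.mp hi).2.le

section Elevate

variable {m : ℕ}

def elevate (v : Fin m → ℤ) : Fin (m + 2) → ℤ :=
  Fin.cons 1 (Fin.snoc v (-1))

lemma elevate_injective : Function.Injective (elevate (m := m)) :=
  fun v v' h => by simpa [elevate, Fin.cons_inj, Fin.snoc_inj] using h

lemma height_cons_snoc (x y : ℤ) (v : Fin m → ℤ) {k : ℕ} (hk : k ≤ m) :
    height 0 (Fin.cons x (Fin.snoc v y) : Fin (m + 2) → ℤ) (k + 1) = x + height 0 v k := by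
  rw [height_cons, height_snoc _ _ _ hk, height_eq_add_height_zero, zero_add]

lemma height_cons_snoc_last (x y : ℤ) (v : Fin m → ℤ) :
    height 0 (Fin.cons x (Fin.snoc v y) : Fin (m + 2) → ℤ) (m + 2) = x + height 0 v m + y := by
  rw [height_cons, height_snoc_last, height_eq_add_height_zero, zero_add]

lemma cons_snoc_mem_strictDyckPaths {x y : ℤ} {v : Fin m → ℤ} :
    (Fin.cons x (Fin.snoc v y) : Fin (m + 2) → ℤ) ∈ strictDyckPaths (m + 2) ↔
      x = 1 ∧ y = -1 ∧ v ∈ dyckPaths m := by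
  have hpos_iff : (∀ i, 0 < i → i < m + 2 →
      0 < height 0 (Fin.cons x (Fin.snoc v y) : Fin (m + 2) → ℤ) i) ↔
        ∀ k ≤ m, 0 < x + height 0 v k := by
    constructor
    · intro h k hk
      rw [← height_cons_snoc x y v hk]
      exact h _ k.succ_pos (by omega)
    · rintro h (_ | k) h0 hk
      · exact absurd h0 (lt_irrefl 0)
      · rw [height_cons_snoc x y v (by omega)]
        exact h k (by omega)
  rw [mem_strictDyckPaths, mem_dyckPaths, hpos_iff, Fin.forall_fin_succ, Fin.forall_fin_succ',
    height_cons_snoc_last]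
  simp only [Fin.cons_zero, Fin.cons_succ, Fin.snoc_castSucc, Fin.snoc_last]
  constructor
  · rintro ⟨⟨hx, hv, hy⟩, hpos, hend⟩
    replace hx : x = 1 := by
      have := hpos 0 (Nat.zero_le _)
      rw [height_zero] at this
      omega
    subst hx
    have := hpos m le_rfl
    exact ⟨rfl, by omega, hv, fun k hk => by linarith [hpos k hk], by omega⟩
  · rintro ⟨rfl, rfl, hv, hnonneg, hend⟩
    exact ⟨⟨by simp, hv, by simp⟩, fun k hk => by linarith [hnonneg k hk], by omega⟩

lemma mem_strictDyckPaths_iff_exists_elevate {w : Fin (m + 2) → ℤ} :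
    w ∈ strictDyckPaths (m + 2) ↔ ∃ v ∈ dyckPaths m, elevate v = w := by
  induction w using Fin.consCases with
  | _ x u =>
    induction u using Fin.snocCases with
    | _ v y =>
      simp only [cons_snoc_mem_strictDyckPaths, elevate, Fin.cons_inj, Fin.snoc_inj]
      constructor
      · rintro ⟨rfl, rfl, hv⟩
        exact ⟨v, hv, rfl, rfl, rfl⟩
      · rintro ⟨v', hv', rfl, rfl, rfl⟩
        exact ⟨rfl, rfl, hv'⟩

lemma strictDyckPaths_eq_map_elevate :
    strictDyckPaths (m + 2) = (dyckPaths m).map ⟨elevate, elevate_injective⟩ := by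
  ext w
  simp [mem_strictDyckPaths_iff_exists_elevate]

lemma area_elevate {v : Fin m → ℤ} (hv : v ∈ dyckPaths m) :
    area (elevate v) = area v + (m + 1) := by
  have hsum : ∑ i ∈ Ico 1 (m + 2), height 0 (elevate v) i
      = ∑ i ∈ Ico 1 m, height 0 v i + (m + 1) := by
    calc ∑ i ∈ Ico 1 (m + 2), height 0 (elevate v) i
        = ∑ k ∈ range (m + 1), (1 + height 0 v k) := by
          rw [sum_Ico_eq_sum_range]
          refine sum_congr rfl fun k hk => ?_
          rw [add_comm 1 k, elevate, height_cons_snoc _ _ _ (by have := mem_range.mp hk; omega)]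
      _ = ∑ i ∈ Ico 1 m, height 0 v i + (m + 1) := by
          rw [sum_add_distrib, ← sum_Ico_height_eq_sum_range (mem_dyckPaths.mp hv).2.2]
          simp [add_comm]
  have := cast_area hv
  unfold area
  rw [hsum]
  omega

end Elevate

theorem sum_strictDyckPaths_pow_area {R : Type*} [CommSemiring R] (q : R) (m : ℕ) :
    ∑ w ∈ strictDyckPaths (m + 2), q ^ area w = q ^ (m + 1) * ∑ v ∈ dyckPaths m, q ^ area v := by
  rw [strictDyckPaths_eq_map_elevate, sum_map, mul_sum]
  refine sum_congr rfl fun v hv => ?_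
  rw [Function.Embedding.coeFn_mk, area_elevate hv, pow_add, mul_comm]

/-- for n ≥ 2, in ℤ[q],
Σ_{w strict Dyck of length n} q^{area(w)} = q^{n−1} · Σ_{v Dyck of length n−2} q^{area(v)}. -/
theorem stmt12 (n : ℕ) (hn : 2 ≤ n) :
    (∑ w ∈ strictDyckPaths n, (X : ℤ[X]) ^ area w)
      = X ^ (n - 1) * ∑ v ∈ dyckPaths (n - 2), (X : ℤ[X]) ^ area v := by
  obtain ⟨m, rfl⟩ := Nat.exists_eq_add_of_le' hn
  rw [show m + 2 - 1 = m + 1 by omega, Nat.add_sub_cancel]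
  exact sum_strictDyckPaths_pow_area X m
end
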